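/- arXiv:2603.17916 — 6 statements merged into one kernel-verified Lean document; each statement's English description precedes it below -/
import Mathlib

section
/- Let G be a finite simple graph on vertex set V with weight function w : V → ℕ, and let S ⊆ V be a set of vertices such that every connected component H of the subgraph induced on V ∖ S satisfies w(H) ≤ w(V)/2. Let λ = 6 + 2√5. Then V ∖ S can be partitioned into two sets A and B such that no edge of G joins a vertex of A to a vertex of B, and w(A ∪ S) · w(B ∪ S) ≥ w(V)² / λ. -/
open scoped Classical

open Finset

private lemma greedy_subset {ι : Type*} (x : ι → ℝ) (M : ℝ) (hM : 0 ≤ M) :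
    ∀ (s : Finset ι) (θ : ℝ), (∀ i ∈ s, 0 ≤ x i ∧ x i ≤ M) → 0 ≤ θ →
      θ ≤ ∑ i ∈ s, x i →
      ∃ u ⊆ s, θ ≤ ∑ i ∈ u, x i ∧ ∑ i ∈ u, x i ≤ θ + M := by
  intro s
  induction s using Finset.induction_on with
  | empty =>
      intro θ _ hθ0 hθ
      exact ⟨∅, Finset.Subset.refl _, by simpa using hθ,
        by simpa using add_nonneg hθ0 hM⟩
  | @insert a s' ha ih =>
      intro θ hx hθ0 hθ
      by_cases hcase : θ ≤ x a
      · refine ⟨{a}, by simp, by simpa using hcase, ?_⟩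
        simpa using le_add_of_nonneg_of_le hθ0 (hx a (mem_insert_self a s')).2
      · push_neg at hcase
        have h0 := hx a (mem_insert_self a s')
        obtain ⟨u, hu, h1, h2⟩ := ih (θ - x a) (fun i hi => hx i (mem_insert_of_mem hi))
          (by linarith) (by rw [Finset.sum_insert ha] at hθ; linarith)
        have hau : a ∉ u := fun h => ha (hu h)
        refine ⟨insert a u, Finset.insert_subset_insert a hu, ?_, ?_⟩ <;>
          rw [Finset.sum_insert hau] <;> linarith

/-- Let `G` be a finite simple graph on vertex set `V` with weight `w : V → ℕ`, and
let `S ⊆ V` be such that every connected component of the subgraph induced on `V \ S`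
has weight at most `w(V)/2`. Let `λ = 6 + 2√5`. Then `V \ S` can be partitioned into
`A` and `B` with no edge of `G` joining `A` to `B` and
`w(A ∪ S) · w(B ∪ S) ≥ w(V)² / λ`. -/
theorem stmt_1 {V : Type*} [Fintype V] [DecidableEq V]
    (G : SimpleGraph V) (w : V → ℕ) (S : Finset V)
    (hS : ∀ (v : V) (hv : v ∈ ((S : Set V)ᶜ)),
      (∑ u ∈ Finset.univ.filter
          (fun u => ∃ hu : u ∈ ((S : Set V)ᶜ),
            (G.induce ((S : Set V)ᶜ)).Reachable ⟨u, hu⟩ ⟨v, hv⟩), (w u : ℝ))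
        ≤ (∑ u, (w u : ℝ)) / 2) :
    ∃ A B : Finset V,
      A ∪ B = Finset.univ \ S ∧ Disjoint A B ∧
      (∀ a ∈ A, ∀ b ∈ B, ¬ G.Adj a b) ∧
      (∑ v ∈ A ∪ S, (w v : ℝ)) * (∑ v ∈ B ∪ S, (w v : ℝ)) ≥
        (∑ v, (w v : ℝ)) ^ 2 / (6 + 2 * Real.sqrt 5) := by
  classical
  set Sc : Set V := ((S : Set V))ᶜ with hScdef
  set G' : SimpleGraph Sc := G.induce Sc with hG'def
  set W : ℝ := ∑ v, (w v : ℝ) with hWdef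
  set s0 : ℝ := ∑ v ∈ S, (w v : ℝ) with hs0def
  have hW0 : 0 ≤ W := Finset.sum_nonneg fun _ _ => Nat.cast_nonneg _
  have hs00 : 0 ≤ s0 := Finset.sum_nonneg fun _ _ => Nat.cast_nonneg _
  -- conversion between sums over V and over the subtype
  have conv : ∀ (P : ↥Sc → Prop) (inst : DecidablePred P),
      ∑ u ∈ Finset.univ.filter (fun u : V => ∃ hu : u ∈ Sc, P ⟨u, hu⟩), (w u : ℝ)
        = ∑ u ∈ @Finset.filter _ P inst Finset.univ, (w (↑u : V) : ℝ) := by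
    intro P inst
    refine (Finset.sum_bij (fun (u : ↥Sc) (_ : u ∈ Finset.univ.filter P) => (u : V))
      ?_ ?_ ?_ ?_).symm
    · intro u hu
      simp only [Finset.mem_filter, Finset.mem_univ, true_and] at hu ⊢
      exact ⟨u.2, hu⟩
    · intro u₁ _ u₂ _ h
      exact Subtype.ext h
    · intro v hv
      simp only [Finset.mem_filter, Finset.mem_univ, true_and] at hv
      obtain ⟨hv1, hv2⟩ := hv
      exact ⟨⟨v, hv1⟩, by simpa using hv2, rfl⟩
    · intro u _
      rfl
  -- component weights
  set Wc : G'.ConnectedComponent → ℝ :=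
    fun c => ∑ u ∈ Finset.univ.filter
      (fun u : ↥Sc => G'.connectedComponentMk u = c), (w (↑u : V) : ℝ) with hWcdef
  have hWc0 : ∀ c, 0 ≤ Wc c := fun c =>
    Finset.sum_nonneg fun _ _ => Nat.cast_nonneg _
  have hWcM : ∀ c, Wc c ≤ W / 2 := by
    intro c
    obtain ⟨v', hv'⟩ := c.exists_rep
    have e1 : Wc c = ∑ u ∈ Finset.univ.filter
        (fun u : ↥Sc => G'.Reachable u v'), (w (↑u : V) : ℝ) := by
      refine Finset.sum_congr ?_ fun _ _ => rfl
      ext u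
      simp only [Finset.mem_filter, Finset.mem_univ, true_and]
      rw [← hv']
      exact SimpleGraph.ConnectedComponent.eq
    have e3 := hS v'.1 v'.2
    have e2 := conv (fun u : ↥Sc => G'.Reachable u v') inferInstance
    have e4 : Wc c = ∑ u ∈ Finset.univ.filter
        (fun u => ∃ hu : u ∈ ((S : Set V)ᶜ),
          (G.induce ((S : Set V)ᶜ)).Reachable ⟨u, hu⟩ ⟨v'.1, v'.2⟩), (w u : ℝ) :=
      e1.trans e2.symm
    exact le_trans (le_of_eq e4) e3
  -- total weight of components
  have htot : ∑ c, Wc c = W - s0 := by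
    rw [hWcdef]
    rw [Finset.sum_fiberwise (Finset.univ) (fun u : ↥Sc => G'.connectedComponentMk u)
      (fun u : ↥Sc => (w (↑u : V) : ℝ))]
    have h1 : ∑ u : ↥Sc, (w (↑u : V) : ℝ) = ∑ u ∈ Finset.univ \ S, (w u : ℝ) := by
      refine (Finset.sum_subtype (Finset.univ \ S) ?_ fun u => (w u : ℝ)).symm
      intro x
      simp [hScdef]
    rw [h1, Finset.sum_sdiff_eq_sub (Finset.subset_univ S)]
  have hTnn : 0 ≤ W - s0 := by
    rw [← htot]; exact Finset.sum_nonneg fun c _ => hWc0 c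
  -- greedy choice
  set θ : ℝ := max 0 (W / 4 - s0) with hθdef
  have hθ0 : 0 ≤ θ := le_max_left _ _
  have hθle : θ ≤ W / 4 := max_le (by linarith) (by linarith)
  obtain ⟨t, -, h1, h2⟩ := greedy_subset Wc (W / 2) (by linarith) Finset.univ θ
    (fun c _ => ⟨hWc0 c, hWcM c⟩) hθ0 (by rw [htot]; exact max_le hTnn (by linarith))
  set a : ℝ := ∑ c ∈ t, Wc c with hadef
  -- the partition
  set A : Finset V := Finset.univ.filter
    (fun u : V => ∃ hu : u ∈ Sc, G'.connectedComponentMk ⟨u, hu⟩ ∈ t) with hAdef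
  set B : Finset V := (Finset.univ \ S) \ A with hBdef
  have hAsub : A ⊆ Finset.univ \ S := by
    intro u hu
    simp only [hAdef, Finset.mem_filter, Finset.mem_univ, true_and] at hu
    obtain ⟨hu1, -⟩ := hu
    simp only [Finset.mem_sdiff, Finset.mem_univ, true_and]
    simpa [hScdef] using hu1
  have hBsub : B ⊆ Finset.univ \ S := Finset.sdiff_subset
  -- the A-sum
  have hAsum : ∑ v ∈ A, (w v : ℝ) = a := by
    have e1 : a = ∑ u ∈ Finset.univ.filter
        (fun u : ↥Sc => G'.connectedComponentMk u ∈ t), (w (↑u : V) : ℝ) := by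
      rw [hadef, ← Finset.sum_fiberwise_of_maps_to
        (g := fun u : ↥Sc => G'.connectedComponentMk u)
        (t := t) (s := Finset.univ.filter
          (fun u : ↥Sc => G'.connectedComponentMk u ∈ t))
        (fun u hu => (Finset.mem_filter.mp hu).2)
        (fun u : ↥Sc => (w (↑u : V) : ℝ))]
      refine Finset.sum_congr rfl fun c hc => ?_
      refine Finset.sum_congr ?_ fun _ _ => rfl
      ext u
      simp only [Finset.mem_filter, Finset.mem_univ, true_and]
      exact ⟨fun h => ⟨h ▸ hc, h⟩, fun h => h.2⟩
    exact (conv (fun u : ↥Sc => G'.connectedComponentMk u ∈ t) inferInstance).trans e1.symm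
  -- sums with S
  have hdisjAS : Disjoint A S := by
    refine Finset.disjoint_left.2 fun u huA huS => ?_
    have := hAsub huA
    simp only [Finset.mem_sdiff] at this
    exact this.2 huS
  have hdisjBS : Disjoint B S := by
    refine Finset.disjoint_left.2 fun u huB huS => ?_
    have := hBsub huB
    simp only [Finset.mem_sdiff] at this
    exact this.2 huS
  have hBsum : ∑ v ∈ B, (w v : ℝ) = (W - s0) - a := by
    rw [hBdef, Finset.sum_sdiff_eq_sub hAsub, hAsum,
      Finset.sum_sdiff_eq_sub (Finset.subset_univ S)]
  refine ⟨A, B, Finset.union_sdiff_of_subset hAsub, Finset.disjoint_sdiff, ?_, ?_⟩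
  · -- no edges between A and B
    intro x hx y hy hadj
    simp only [hAdef, Finset.mem_filter, Finset.mem_univ, true_and] at hx
    obtain ⟨hx1, hx2⟩ := hx
    simp only [hBdef, Finset.mem_sdiff, Finset.mem_univ, true_and] at hy
    obtain ⟨hy1, hy2⟩ := hy
    have hy1' : y ∈ Sc := by simpa [hScdef] using hy1
    have hadj' : G'.Adj ⟨x, hx1⟩ ⟨y, hy1'⟩ := by
      rw [hG'def]
      exact hadj
    apply hy2
    simp only [hAdef, Finset.mem_filter, Finset.mem_univ, true_and]
    refine ⟨hy1', ?_⟩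
    rwa [SimpleGraph.ConnectedComponent.sound hadj'.symm.reachable]
  · -- the weight inequality
    rw [Finset.sum_union hdisjAS, Finset.sum_union hdisjBS, hAsum, hBsum]
    have hx4 : W / 4 ≤ a + s0 := by
      have : W / 4 - s0 ≤ θ := le_max_right _ _
      linarith
    have hy4 : W / 4 ≤ (W - s0 - a) + s0 := by linarith
    have hq : Real.sqrt 5 ^ 2 = 5 := Real.sq_sqrt (by norm_num)
    have hq0 : 0 ≤ Real.sqrt 5 := Real.sqrt_nonneg 5
    have hq2 : 2 ≤ Real.sqrt 5 := by nlinarith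
    rw [ge_iff_le, div_le_iff₀ (by linarith)]
    have hxy : 3 * W ^ 2 / 16 ≤ (a + s0) * ((W - s0 - a) + s0) := by
      nlinarith [mul_nonneg (by linarith : (0:ℝ) ≤ a + s0 - W / 4)
        (by linarith : (0:ℝ) ≤ (W - s0 - a) + s0 - W / 4)]
    have hxy0 : (0:ℝ) ≤ (a + s0) * ((W - s0 - a) + s0) := le_trans (by positivity) hxy
    nlinarith [mul_nonneg hxy0 (by linarith : (0:ℝ) ≤ 6 + 2 * Real.sqrt 5 - 10)]
end

section
/- Let G be a finite simple graph on vertex set V with weight function w : V → ℕ, and let S ⊆ V be a set of vertices such that every connected component H of the subgraph induced on V ∖ S satisfies w(H) ≤ w(V)/2. Let λ = (22 + 2√5 + (1+√5)·√(38+2√5)) / 8 (≈ 5.95). Then V ∖ S can be partitioned into two sets A and B such that no edge of G joins a vertex of A to a vertex of B, and w(A ∪ S) · w(B ∪ S) ≥ w(V)² / λ. -/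
open scoped Classical

private lemma stmt2_lam_aux : (16 : ℝ) / 3 ≤
    (22 + 2 * Real.sqrt 5 + (1 + Real.sqrt 5) * Real.sqrt (38 + 2 * Real.sqrt 5)) / 8 := by
  set p : ℝ := Real.sqrt 5 with hpdef
  set q : ℝ := Real.sqrt (38 + 2 * p) with hqdef
  have hp0 : 0 ≤ p := Real.sqrt_nonneg _
  have hp2 : p ^ 2 = 5 := Real.sq_sqrt (by norm_num)
  have hq0 : 0 ≤ q := Real.sqrt_nonneg _
  have hq2 : q ^ 2 = 38 + 2 * p := Real.sq_sqrt (by positivity)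
  have hp22 : (2.2 : ℝ) ≤ p := by nlinarith [hp0, hp2]
  have hq65 : (6.5 : ℝ) ≤ q := by nlinarith [hq0, hq2, hp22]
  nlinarith [hp22, hq65, mul_nonneg (sub_nonneg.2 hp22) (sub_nonneg.2 hq65)]

private lemma stmt2_lam_pos : (0 : ℝ) <
    (22 + 2 * Real.sqrt 5 + (1 + Real.sqrt 5) * Real.sqrt (38 + 2 * Real.sqrt 5)) / 8 :=
  lt_of_lt_of_le (by norm_num) stmt2_lam_aux

/-- Let `G` be a finite simple graph on vertex set `V` with weight `w : V → ℕ`, and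
let `S ⊆ V` be such that every connected component of the subgraph induced on `V \ S`
has weight at most `w(V)/2`. Let `λ = (22 + 2√5 + (1+√5)·√(38+2√5))/8`. Then `V \ S` can be partitioned into
`A` and `B` with no edge of `G` joining `A` to `B` and
`w(A ∪ S) · w(B ∪ S) ≥ w(V)² / λ`. -/
theorem stmt_2 {V : Type*} [Fintype V] [DecidableEq V]
    (G : SimpleGraph V) (w : V → ℕ) (S : Finset V)
    (hS : ∀ (v : V) (hv : v ∈ ((S : Set V)ᶜ)),
      (∑ u ∈ Finset.univ.filter
          (fun u => ∃ hu : u ∈ ((S : Set V)ᶜ),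
            (G.induce ((S : Set V)ᶜ)).Reachable ⟨u, hu⟩ ⟨v, hv⟩), (w u : ℝ))
        ≤ (∑ u, (w u : ℝ)) / 2) :
    ∃ A B : Finset V,
      A ∪ B = Finset.univ \ S ∧ Disjoint A B ∧
      (∀ a ∈ A, ∀ b ∈ B, ¬ G.Adj a b) ∧
      (∑ v ∈ A ∪ S, (w v : ℝ)) * (∑ v ∈ B ∪ S, (w v : ℝ)) ≥
        (∑ v, (w v : ℝ)) ^ 2 / ((22 + 2 * Real.sqrt 5 + (1 + Real.sqrt 5) * Real.sqrt (38 + 2 * Real.sqrt 5)) / 8) := by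
  classical
  set W : ℝ := ∑ v, (w v : ℝ) with hWdef
  set T : Finset V := Finset.univ \ S with hTdef
  -- the component of a vertex
  set comp : V → Finset V := fun v =>
    Finset.univ.filter (fun u => ∃ (hu : u ∈ ((S : Set V)ᶜ)) (hv : v ∈ ((S : Set V)ᶜ)),
      (G.induce ((S : Set V)ᶜ)).Reachable ⟨u, hu⟩ ⟨v, hv⟩) with hcompdef
  have mem_comp : ∀ u v : V, u ∈ comp v ↔
      ∃ (hu : u ∈ ((S : Set V)ᶜ)) (hv : v ∈ ((S : Set V)ᶜ)),
        (G.induce ((S : Set V)ᶜ)).Reachable ⟨u, hu⟩ ⟨v, hv⟩ := by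
    intro u v; simp [hcompdef]
  have comp_subT : ∀ u v : V, u ∈ comp v → u ∈ T := by
    intro u v hu
    rcases (mem_comp u v).1 hu with ⟨hu', _, _⟩
    simp only [hTdef, Finset.mem_sdiff, Finset.mem_univ, true_and]
    simpa using hu'
  have comp_self : ∀ v : V, v ∈ T → v ∈ comp v := by
    intro v hv
    have hv' : v ∈ ((S : Set V)ᶜ) := by
      simp only [hTdef, Finset.mem_sdiff] at hv; simpa using hv.2
    exact (mem_comp v v).2 ⟨hv', hv', SimpleGraph.Reachable.refl _⟩
  have comp_symm : ∀ u v : V, u ∈ comp v → v ∈ comp u := by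
    intro u v hu
    rcases (mem_comp u v).1 hu with ⟨hu', hv', hr⟩
    exact (mem_comp v u).2 ⟨hv', hu', hr.symm⟩
  have comp_trans : ∀ u v x : V, u ∈ comp v → v ∈ comp x → u ∈ comp x := by
    intro u v x h1 h2
    rcases (mem_comp u v).1 h1 with ⟨hu', hv', hr1⟩
    rcases (mem_comp v x).1 h2 with ⟨hv'', hx', hr2⟩
    exact (mem_comp u x).2 ⟨hu', hx', hr1.trans hr2⟩
  -- weight of a component is at most W/2
  have comp_weight : ∀ v : V, v ∈ T → (∑ u ∈ comp v, (w u : ℝ)) ≤ W / 2 := by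
    intro v hv
    have hv' : v ∈ ((S : Set V)ᶜ) := by
      simp only [hTdef, Finset.mem_sdiff] at hv; simpa using hv.2
    have h := hS v hv'
    have heq : comp v = Finset.univ.filter
        (fun u => ∃ hu : u ∈ ((S : Set V)ᶜ),
          (G.induce ((S : Set V)ᶜ)).Reachable ⟨u, hu⟩ ⟨v, hv'⟩) := by
      ext u
      simp only [hcompdef, Finset.mem_filter, Finset.mem_univ, true_and]
      constructor
      · rintro ⟨hu, hv2, hr⟩; exact ⟨hu, hr⟩
      · rintro ⟨hu, hr⟩; exact ⟨hu, hv', hr⟩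
    rw [heq]; exact h
  -- adjacency within T gives membership of components
  have comp_adj : ∀ a b : V, a ∈ T → b ∈ T → G.Adj a b → a ∈ comp b := by
    intro a b ha hb hadj
    have ha' : a ∈ ((S : Set V)ᶜ) := by
      simp only [hTdef, Finset.mem_sdiff] at ha; simpa using ha.2
    have hb' : b ∈ ((S : Set V)ᶜ) := by
      simp only [hTdef, Finset.mem_sdiff] at hb; simpa using hb.2
    refine (mem_comp a b).2 ⟨ha', hb', SimpleGraph.Adj.reachable ?_⟩
    simpa [SimpleGraph.comap] using hadj
  -- closed sets
  set closed : Finset V → Prop := fun A => A ⊆ T ∧ ∀ v ∈ A, comp v ⊆ A with hcloseddef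
  have closed_compl : ∀ A : Finset V, closed A → closed (T \ A) := by
    intro A hA
    refine ⟨Finset.sdiff_subset, ?_⟩
    intro v hv u hu
    have hvT : v ∈ T := (Finset.mem_sdiff.1 hv).1
    have hvA : v ∉ A := (Finset.mem_sdiff.1 hv).2
    refine Finset.mem_sdiff.2 ⟨comp_subT u v hu, fun huA => hvA ?_⟩
    exact hA.2 u huA (comp_symm u v hu)
  have closed_union : ∀ A B : Finset V, closed A → closed B → closed (A ∪ B) := by
    intro A B hA hB
    refine ⟨Finset.union_subset hA.1 hB.1, ?_⟩
    intro v hv u hu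
    rcases Finset.mem_union.1 hv with h | h
    · exact Finset.mem_union.2 (Or.inl (hA.2 v h hu))
    · exact Finset.mem_union.2 (Or.inr (hB.2 v h hu))
  have closed_sdiff : ∀ A B : Finset V, closed A → closed B → closed (A \ B) := by
    intro A B hA hB
    refine ⟨Finset.sdiff_subset.trans hA.1, ?_⟩
    intro v hv u hu
    have hvA : v ∈ A := (Finset.mem_sdiff.1 hv).1
    have hvB : v ∉ B := (Finset.mem_sdiff.1 hv).2
    refine Finset.mem_sdiff.2 ⟨hA.2 v hvA hu, fun huB => hvB ?_⟩
    exact hB.2 u huB (comp_symm u v hu)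
  have closed_comp : ∀ v : V, closed (comp v) := by
    intro v
    refine ⟨fun u hu => comp_subT u v hu, ?_⟩
    intro x hx u hu
    exact comp_trans u x v hu hx
  -- choose the closed set minimizing the imbalance
  have hne : (Finset.univ.powerset.filter closed).Nonempty := by
    refine ⟨∅, ?_⟩
    simp only [Finset.mem_filter, Finset.mem_powerset]
    exact ⟨Finset.empty_subset _, Finset.empty_subset _, by simp⟩
  obtain ⟨A, hAmem, hAmin⟩ := Finset.exists_min_image (Finset.univ.powerset.filter closed)
    (fun A => |(∑ v ∈ A, (w v : ℝ)) - (∑ v ∈ T \ A, (w v : ℝ))|) hne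
  have hAclosed : closed A := (Finset.mem_filter.1 hAmem).2
  set B : Finset V := T \ A with hBdef
  have hBclosed : closed B := closed_compl A hAclosed
  set a : ℝ := ∑ v ∈ A, (w v : ℝ) with hadef
  set b : ℝ := ∑ v ∈ B, (w v : ℝ) with hbdef
  set s : ℝ := ∑ v ∈ S, (w v : ℝ) with hsdef
  have hAT : A ⊆ T := hAclosed.1
  have hAB : A ∪ B = T := Finset.union_sdiff_of_subset hAT
  have hABdisj : Disjoint A B := Finset.disjoint_sdiff
  -- the imbalance is small: |a - b| ≤ W / 2
  have key : |a - b| ≤ W / 2 := by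
    by_contra hcon
    push_neg at hcon
    -- find the heavier side, a positive-weight vertex in it, move its component
    rcases le_or_gt a b with hab | hab
    · -- b - a > W/2 ; there is v ∈ B with w v > 0
      have hba : b - a > W / 2 := by
        rw [abs_sub_comm] at hcon
        rwa [abs_of_nonneg (by linarith)] at hcon
      have hW0 : 0 ≤ W := Finset.sum_nonneg (fun i _ => by positivity)
      have ha0 : 0 ≤ a := Finset.sum_nonneg (fun i _ => by positivity)
      have hbpos : 0 < b := by linarith
      have : ∃ v ∈ B, 0 < (w v : ℝ) := by
        by_contra h
        push_neg at h
        have : b ≤ 0 := Finset.sum_nonpos (fun i hi => h i hi)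
        linarith
      obtain ⟨v, hvB, hvpos⟩ := this
      have hvT : v ∈ T := hBclosed.1 hvB
      have hCB : comp v ⊆ B := hBclosed.2 v hvB
      set c : ℝ := ∑ u ∈ comp v, (w u : ℝ) with hcdef
      have hcpos : 0 < c := by
        have : (w v : ℝ) ≤ c :=
          Finset.single_le_sum (f := fun u => (w u : ℝ)) (fun i _ => by positivity)
            (comp_self v hvT)
        linarith
      have hcle : c ≤ W / 2 := comp_weight v hvT
      -- candidate A ∪ comp v
      have hA'closed : closed (A ∪ comp v) := closed_union A (comp v) hAclosed (closed_comp v)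
      have hA'mem : A ∪ comp v ∈ Finset.univ.powerset.filter closed := by
        simp only [Finset.mem_filter, Finset.mem_powerset]
        exact ⟨Finset.subset_univ _, hA'closed⟩
      have hdisjAC : Disjoint A (comp v) := hABdisj.mono_right hCB
      have hsum1 : (∑ x ∈ A ∪ comp v, (w x : ℝ)) = a + c := by
        rw [Finset.sum_union hdisjAC]
      have hTsub : T \ (A ∪ comp v) = B \ comp v := by
        ext u
        simp only [hBdef, Finset.mem_sdiff, Finset.mem_union]
        tauto
      have hsum2 : (∑ x ∈ T \ (A ∪ comp v), (w x : ℝ)) = b - c := by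
        rw [hTsub, Finset.sum_sdiff_eq_sub hCB]
      have hmin := hAmin (A ∪ comp v) hA'mem
      rw [hsum1, hsum2] at hmin
      rcases abs_cases (a + c - (b - c)) with ⟨h1, _⟩ | ⟨h1, _⟩ <;>
        rcases abs_cases (a - b) with ⟨h2, _⟩ | ⟨h2, _⟩ <;> rw [h1, h2] at hmin <;> linarith
    · -- a - b > W/2 ; there is v ∈ A with w v > 0
      have hba : a - b > W / 2 := by
        rwa [abs_of_nonneg (by linarith)] at hcon
      have hW0 : 0 ≤ W := Finset.sum_nonneg (fun i _ => by positivity)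
      have hb0 : 0 ≤ b := Finset.sum_nonneg (fun i _ => by positivity)
      have hapos : 0 < a := by linarith
      have : ∃ v ∈ A, 0 < (w v : ℝ) := by
        by_contra h
        push_neg at h
        have : a ≤ 0 := Finset.sum_nonpos (fun i hi => h i hi)
        linarith
      obtain ⟨v, hvA, hvpos⟩ := this
      have hvT : v ∈ T := hAclosed.1 hvA
      have hCA : comp v ⊆ A := hAclosed.2 v hvA
      set c : ℝ := ∑ u ∈ comp v, (w u : ℝ) with hcdef
      have hcpos : 0 < c := by
        have : (w v : ℝ) ≤ c :=
          Finset.single_le_sum (f := fun u => (w u : ℝ)) (fun i _ => by positivity)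
            (comp_self v hvT)
        linarith
      have hcle : c ≤ W / 2 := comp_weight v hvT
      have hA'closed : closed (A \ comp v) := closed_sdiff A (comp v) hAclosed (closed_comp v)
      have hA'mem : A \ comp v ∈ Finset.univ.powerset.filter closed := by
        simp only [Finset.mem_filter, Finset.mem_powerset]
        exact ⟨Finset.subset_univ _, hA'closed⟩
      have hsum1 : (∑ x ∈ A \ comp v, (w x : ℝ)) = a - c := by
        rw [Finset.sum_sdiff_eq_sub hCA]
      have hTsub : T \ (A \ comp v) = B ∪ comp v := by
        ext u
        simp only [Finset.mem_sdiff, hBdef, Finset.mem_union]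
        constructor
        · rintro ⟨huT, hu⟩
          by_cases h : u ∈ comp v
          · exact Or.inr h
          · exact Or.inl ⟨huT, fun huA => hu ⟨huA, h⟩⟩
        · rintro (⟨huT, huA⟩ | h)
          · exact ⟨huT, fun hx => huA hx.1⟩
          · exact ⟨comp_subT u v h, fun hx => hx.2 h⟩
      have hdisjBC : Disjoint B (comp v) := (Finset.disjoint_sdiff).symm.mono_right hCA
      have hsum2 : (∑ x ∈ T \ (A \ comp v), (w x : ℝ)) = b + c := by
        rw [hTsub, Finset.sum_union hdisjBC]
      have hmin := hAmin (A \ comp v) hA'mem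
      rw [hsum1, hsum2] at hmin
      rcases abs_cases (a - c - (b + c)) with ⟨h1, _⟩ | ⟨h1, _⟩ <;>
        rcases abs_cases (a - b) with ⟨h2, _⟩ | ⟨h2, _⟩ <;> rw [h1, h2] at hmin <;> linarith
  -- now the arithmetic
  refine ⟨A, B, by rw [hAB, hTdef], hABdisj, ?_, ?_⟩
  · intro x hx y hy hadj
    have hxT : x ∈ T := hAclosed.1 hx
    have hyT : y ∈ T := hBclosed.1 hy
    have : x ∈ comp y := comp_adj x y hxT hyT hadj
    have : x ∈ B := hBclosed.2 y hy this
    exact (Finset.disjoint_left.1 hABdisj hx) this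
  · have hST : Disjoint T S := by
      rw [hTdef]; exact Finset.sdiff_disjoint
    have hAS : Disjoint A S := hST.mono_left hAT
    have hBS : Disjoint B S := hST.mono_left Finset.sdiff_subset
    have hsumA : (∑ v ∈ A ∪ S, (w v : ℝ)) = a + s := Finset.sum_union hAS
    have hsumB : (∑ v ∈ B ∪ S, (w v : ℝ)) = b + s := Finset.sum_union hBS
    have hWsum : a + b + s = W := by
      have huniv : T ∪ S = Finset.univ := Finset.sdiff_union_of_subset (Finset.subset_univ S)
      have h1 : W = (∑ v ∈ T, (w v : ℝ)) + s := by
        rw [hWdef, ← huniv, Finset.sum_union hST]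
      have h2 : (∑ v ∈ T, (w v : ℝ)) = a + b := by
        rw [← hAB, Finset.sum_union hABdisj]
      rw [h1, h2]
    have hW0 : 0 ≤ W := Finset.sum_nonneg (fun i _ => by positivity)
    have hs0 : 0 ≤ s := Finset.sum_nonneg (fun i _ => by positivity)
    obtain ⟨d1, d2⟩ := abs_le.1 key
    have e1 : 4 * ((a + s) * (b + s)) = (W + s) ^ 2 - (a - b) ^ 2 := by
      rw [← hWsum]; ring
    have e2 : (a - b) ^ 2 ≤ (W / 2) ^ 2 := by nlinarith
    have e3 : W ^ 2 ≤ (W + s) ^ 2 := by nlinarith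
    have h316 : 3 / 16 * W ^ 2 ≤ (a + s) * (b + s) := by nlinarith
    have ha0 : 0 ≤ a := Finset.sum_nonneg (fun i _ => by positivity)
    have hb0 : 0 ≤ b := Finset.sum_nonneg (fun i _ => by positivity)
    have hP0 : 0 ≤ (a + s) * (b + s) := mul_nonneg (by linarith) (by linarith)
    rw [hsumA, hsumB, ge_iff_le, div_le_iff₀ stmt2_lam_pos]
    have hfin : (3 / 16 * W ^ 2) * (16 / 3) ≤ ((a + s) * (b + s)) *
        ((22 + 2 * Real.sqrt 5 + (1 + Real.sqrt 5) * Real.sqrt (38 + 2 * Real.sqrt 5)) / 8) :=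
      mul_le_mul h316 stmt2_lam_aux (by norm_num) hP0
    linarith
end

section
/- Let V be a finite set with |V| = n ≥ 1, let w : V → ℕ be a weight function with w(V) > 0, and let α and δ be real numbers with 0 < δ < α. Define K = δ·w(V)/(n·α), define w'(v) = ⌊w(v)/K⌋ for every v ∈ V, and define α' = α·K·w'(V)/w(V). Then w'(V) > 0, and for every subset H ⊆ V with w(H) ≤ w(V)/α, one has w'(H) ≤ w'(V)/α'. -/
/-- Feasibility preservation in the bicriteria FPTAS for the Weighted α-Separator
Problem: with `K = δ·w(V)/(n·α)`, `w'(v) = ⌊w(v)/K⌋` and `α' = α·K·w'(V)/w(V)`,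
the rounded total weight is positive and any `H ⊆ V` with `w(H) ≤ w(V)/α`
satisfies `w'(H) ≤ w'(V)/α'`. -/
theorem stmt_6 {V : Type*} [Fintype V] (w : V → ℕ)
    (hn : 1 ≤ Fintype.card V) (hW : 0 < ∑ v, w v)
    (α δ : ℝ) (hδ : 0 < δ) (hδα : δ < α) :
    let n : ℕ := Fintype.card V
    let W : ℝ := ∑ v, (w v : ℝ)
    let K : ℝ := δ * W / (n * α)
    let w' : V → ℕ := fun v => ⌊(w v : ℝ) / K⌋₊
    let W' : ℝ := ∑ v, (w' v : ℝ)
    let α' : ℝ := α * K * W' / W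
    0 < W' ∧
      ∀ H : Finset V, (∑ v ∈ H, (w v : ℝ)) ≤ W / α →
        (∑ v ∈ H, (w' v : ℝ)) ≤ W' / α' := by
  intro n W K w' W' α'
  have hα : 0 < α := hδ.trans hδα
  have hWpos : 0 < W := by
    have : (0:ℝ) < ((∑ v, w v : ℕ) : ℝ) := by exact_mod_cast hW
    simpa [W, Nat.cast_sum] using this
  have hn0 : (0:ℝ) < (n : ℝ) := by exact_mod_cast hn
  have hK : 0 < K := by
    have : 0 < δ * W / ((n:ℝ) * α) := by positivity
    simpa [K] using this
  have hne : Nonempty V := Fintype.card_pos_iff.mp hn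
  obtain ⟨v, hv⟩ : ∃ v : V, W / (n:ℝ) ≤ (w v : ℝ) := by
    by_contra h
    push_neg at h
    have hlt : W < W := by
      calc W = ∑ v, (w v : ℝ) := rfl
        _ < ∑ _v : V, W / (n:ℝ) := by
            refine Finset.sum_lt_sum_of_nonempty Finset.univ_nonempty fun i _ => h i
        _ = W := by
            rw [Finset.sum_const, nsmul_eq_mul]
            show (n:ℝ) * (W / n) = W
            field_simp
    exact lt_irrefl _ hlt
  have hvK : (1:ℝ) ≤ (w v : ℝ) / K := by
    have h1 : K < W / (n:ℝ) := by
      have : K = (δ / α) * (W / n) := by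
        show δ * W / ((n:ℝ) * α) = _
        field_simp
      rw [this]
      have hda : δ / α < 1 := (div_lt_one hα).mpr hδα
      have hWn : 0 < W / (n:ℝ) := by positivity
      nlinarith
    have : K ≤ (w v : ℝ) := le_of_lt (lt_of_lt_of_le h1 hv)
    rw [le_div_iff₀ hK]
    linarith
  have hw'v : 1 ≤ w' v := Nat.le_floor (by exact_mod_cast hvK)
  have hW'pos : 0 < W' := by
    refine Finset.sum_pos' (fun i _ => by positivity) ⟨v, Finset.mem_univ v, ?_⟩
    exact_mod_cast hw'v
  refine ⟨hW'pos, fun H hH => ?_⟩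
  have key : (∑ u ∈ H, (w' u : ℝ)) ≤ W / (α * K) := by
    calc (∑ u ∈ H, (w' u : ℝ)) ≤ ∑ u ∈ H, (w u : ℝ) / K := by
          refine Finset.sum_le_sum fun i _ => ?_
          exact Nat.floor_le (by positivity)
      _ = (∑ u ∈ H, (w u : ℝ)) / K := by rw [Finset.sum_div]
      _ ≤ (W / α) / K := by gcongr
      _ = W / (α * K) := by rw [div_div]
  have hα' : W' / α' = W / (α * K) := by
    show W' / (α * K * W' / W) = W / (α * K)
    have h1 : W' ≠ 0 := ne_of_gt hW'pos
    have h2 : α * K ≠ 0 := by positivity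
    have h3 : W ≠ 0 := ne_of_gt hWpos
    field_simp
  rw [hα']
  exact key
end

section
/- Let V be a finite set with |V| = n ≥ 1, let w : V → ℕ be a weight function with w(V) > 0, and let α and δ be real numbers with 0 < δ < α. Define K = δ·w(V)/(n·α), define w'(v) = ⌊w(v)/K⌋ for every v ∈ V, and define α' = α·K·w'(V)/w(V). Then for every subset H ⊆ V with w'(H) ≤ w'(V)/α', one has w(H) ≤ (1 + δ)·w(V)/α. -/
/-!
Rounding loses less than `K` per vertex, so `w(H) ≤ K·w'(H) + |H|·K ≤ K·w'(H) + δ·w(V)/α`.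
The feasibility bound `w'(H) ≤ w'(V)/α'` is exactly `K·w'(H) ≤ w(V)/α`, since `α'` was chosen
so that `w'(V)/α' = w(V)/(α·K)`.
-/

open Finset

lemma le_mul_floor_div_add {K : ℝ} (hK : 0 < K) (x : ℝ) : x ≤ K * ⌊x / K⌋₊ + K := by
  have h := (div_lt_iff₀ hK).mp (Nat.lt_floor_add_one (x / K))
  linarith

lemma sum_le_mul_sum_floor_div_add {ι : Type*} {K : ℝ} (hK : 0 < K) (s : Finset ι) (f : ι → ℝ) :
    ∑ i ∈ s, f i ≤ K * ∑ i ∈ s, (⌊f i / K⌋₊ : ℝ) + #s * K := by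
  calc ∑ i ∈ s, f i ≤ ∑ i ∈ s, (K * ⌊f i / K⌋₊ + K) :=
        sum_le_sum fun i _ => le_mul_floor_div_add hK (f i)
    _ = K * ∑ i ∈ s, (⌊f i / K⌋₊ : ℝ) + #s * K := by
        rw [sum_add_distrib, mul_sum, sum_const, nsmul_eq_mul]

/-- For `b ≠ 0` this is an equality; for `b = 0` the left side is the junk value `0`. -/
lemma div_div_mul_div_le {a b c : ℝ} (ha : 0 ≤ a) (hc : 0 ≤ c) : b / (c * b / a) ≤ a / c := by
  rcases eq_or_ne b 0 with rfl | hb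
  · simpa using div_nonneg ha hc
  · rw [div_div_eq_mul_div, mul_comm c b, mul_div_mul_left _ _ hb]

theorem stmt_7_general {V : Type*} [Fintype V] (w : V → ℕ)
    (hW : 0 < ∑ v, w v)
    (α δ : ℝ) (hδ : 0 < δ) (hδα : δ < α) :
    let n : ℕ := Fintype.card V
    let W : ℝ := ∑ v, (w v : ℝ)
    let K : ℝ := δ * W / (n * α)
    let w' : V → ℕ := fun v => ⌊(w v : ℝ) / K⌋₊
    let W' : ℝ := ∑ v, (w' v : ℝ)
    let α' : ℝ := α * K * W' / W
    ∀ H : Finset V, (∑ v ∈ H, (w' v : ℝ)) ≤ W' / α' →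
      (∑ v ∈ H, (w v : ℝ)) ≤ (1 + δ) * W / α := by
  intro n W K w' W' α' H hH
  have hα : 0 < α := hδ.trans hδα
  have hWpos : 0 < W := by simpa [W] using (Nat.cast_pos (α := ℝ)).mpr hW
  have hn : (n : ℝ) ≠ 0 := by
    obtain ⟨v, -, -⟩ := exists_ne_zero_of_sum_ne_zero hW.ne'
    have : Nonempty V := ⟨v⟩
    exact_mod_cast Fintype.card_ne_zero
  have hK : 0 < K := div_pos (mul_pos hδ hWpos) (mul_pos (by positivity) hα)
  have hnK : n * K = δ * W / α := by simp only [K]; field_simp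
  have hfeasible : K * ∑ v ∈ H, (w' v : ℝ) ≤ W / α := by
    have h := (le_div_iff₀ (mul_pos hα hK)).mp
      (hH.trans (div_div_mul_div_le hWpos.le (mul_pos hα hK).le))
    rw [le_div_iff₀ hα]
    linarith
  have hcard : (#H : ℝ) ≤ n := by exact_mod_cast card_le_univ H
  calc ∑ v ∈ H, (w v : ℝ) ≤ K * ∑ v ∈ H, (w' v : ℝ) + #H * K :=
        sum_le_mul_sum_floor_div_add hK H _
    _ ≤ W / α + n * K := by gcongr
    _ = (1 + δ) * W / α := by rw [hnK]; ring

/-- Guarantee of the bicriteria FPTAS for the Weighted α-Separator Problem: with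
`K = δ·w(V)/(n·α)`, `w'(v) = ⌊w(v)/K⌋` and `α' = α·K·w'(V)/w(V)`, any `H ⊆ V`
with `w'(H) ≤ w'(V)/α'` satisfies `w(H) ≤ (1 + δ)·w(V)/α`. -/
theorem stmt_7 {V : Type*} [Fintype V] (w : V → ℕ)
    (hn : 1 ≤ Fintype.card V) (hW : 0 < ∑ v, w v)
    (α δ : ℝ) (hδ : 0 < δ) (hδα : δ < α) :
    let n : ℕ := Fintype.card V
    let W : ℝ := ∑ v, (w v : ℝ)
    let K : ℝ := δ * W / (n * α)
    let w' : V → ℕ := fun v => ⌊(w v : ℝ) / K⌋₊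
    let W' : ℝ := ∑ v, (w' v : ℝ)
    let α' : ℝ := α * K * W' / W
    ∀ H : Finset V, (∑ v ∈ H, (w' v : ℝ)) ≤ W' / α' →
      (∑ v ∈ H, (w v : ℝ)) ≤ (1 + δ) * W / α :=
  stmt_7_general w hW α δ hδ hδα
end

section
/- Let T be a finite tree on a nonempty vertex set V and let S : V → (finite subsets of V) be a pseudo-separator assignment. For v ∈ V define T^{S(v)} = ⋃_{u ∈ S(v)} P(v,u). Then ⋂_{v ∈ V} T^{S(v)} ≠ ∅; that is, there exists a vertex r contained in T^{S(v)} for every v ∈ V. -/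
/-- The vertex set of the unique path between `u` and `v` in a tree `G`
(stated via existence of a path containing the vertex, which in a tree is
the unique path). -/
def pathSet {V : Type*} (G : SimpleGraph V) (u v : V) : Set V :=
  {x | ∃ p : G.Path u v, x ∈ (p : G.Walk u v).support}

/-- A pseudo-separator assignment: for every pair `u, v` there exist
`u' ∈ S(u)` and `v' ∈ S(v)` with `u' ∈ P(v, v')` and `v' ∈ P(u, u')`. -/
def IsPseudoSepAssignment {V : Type*} (G : SimpleGraph V) (S : V → Finset V) : Prop :=
  ∀ u v : V, ∃ u' ∈ S u, ∃ v' ∈ S v,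
    u' ∈ pathSet G v v' ∧ v' ∈ pathSet G u u'

namespace TreeHellyAux

open SimpleGraph Walk

variable {V : Type*} {G : SimpleGraph V}

section

variable (hU : ∀ u v : V, ∃! p : G.Walk u v, p.IsPath)

include hU

/-- The canonical path between two vertices in a tree. -/
noncomputable def tpath (u v : V) : G.Walk u v := (hU u v).choose

lemma tpath_isPath (u v : V) : (tpath hU u v).IsPath := (hU u v).choose_spec.1

lemma tpath_unique {u v : V} (p : G.Walk u v) (hp : p.IsPath) : p = tpath hU u v :=
  (hU u v).choose_spec.2 p hp

lemma mem_pathSet_iff {u v x : V} {p : G.Walk u v} (hp : p.IsPath) :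
    x ∈ pathSet G u v ↔ x ∈ p.support := by
  constructor
  · rintro ⟨q, hq⟩
    have hqp : (q : G.Walk u v) = p :=
      (tpath_unique hU (q : G.Walk u v) q.2).trans (tpath_unique hU p hp).symm
    rwa [hqp] at hq
  · intro hx; exact ⟨⟨p, hp⟩, hx⟩

/-- Length of the canonical path. -/
noncomputable def tlen (u v : V) : ℕ := (tpath hU u v).length

lemma left_mem_pathSet (u v : V) : u ∈ pathSet G u v :=
  ⟨⟨tpath hU u v, tpath_isPath hU u v⟩, Walk.start_mem_support _⟩

lemma right_mem_pathSet (u v : V) : v ∈ pathSet G u v :=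
  ⟨⟨tpath hU u v, tpath_isPath hU u v⟩, Walk.end_mem_support _⟩

lemma pathSet_split {u v x : V} (hx : x ∈ pathSet G u v) :
    pathSet G u v = pathSet G u x ∪ pathSet G x v ∧
      tlen hU u x + tlen hU x v = tlen hU u v := by
  classical
  have hp : (tpath hU u v).IsPath := tpath_isPath hU u v
  have hx' : x ∈ (tpath hU u v).support := (mem_pathSet_iff hU hp).mp hx
  set p := tpath hU u v with hpdef
  have ht : (p.takeUntil x hx').IsPath := hp.takeUntil hx'
  have hd : (p.dropUntil x hx').IsPath := hp.dropUntil hx'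
  have e1 : p.takeUntil x hx' = tpath hU u x := tpath_unique hU _ ht
  have e2 : p.dropUntil x hx' = tpath hU x v := tpath_unique hU _ hd
  constructor
  · ext y
    rw [Set.mem_union, mem_pathSet_iff hU hp, mem_pathSet_iff hU (tpath_isPath hU u x),
      mem_pathSet_iff hU (tpath_isPath hU x v), ← e1, ← e2]
    conv_lhs => rw [← take_spec p hx']
    rw [mem_support_append_iff]
  · have hl := congrArg Walk.length (take_spec p hx')
    rw [length_append] at hl
    rw [tlen, tlen, tlen, ← e1, ← e2, hl]

lemma pathSet_symm (u v : V) : pathSet G u v = pathSet G v u := by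
  ext x
  rw [mem_pathSet_iff hU (tpath_isPath hU u v),
    mem_pathSet_iff hU (tpath_isPath hU u v).reverse, support_reverse, List.mem_reverse]

omit hU in
lemma isPath_append {a m b : V} {p : G.Walk a m} {q : G.Walk m b}
    (hp : p.IsPath) (hq : q.IsPath)
    (h : ∀ y, y ∈ p.support → y ∈ q.support → y = m) : (p.append q).IsPath := by
  rw [isPath_def, support_append]
  have hqc : q.support = m :: q.support.tail := q.support_eq_cons
  have h2 := hq.support_nodup
  rw [hqc, List.nodup_cons] at h2
  refine List.Nodup.append hp.support_nodup h2.2 ?_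
  intro y hy hy'
  have hym : y = m := h y hy (by rw [hqc]; exact List.mem_cons_of_mem _ hy')
  subst hym
  exact h2.1 hy'

end

lemma exists_first (Pred : V → Prop) :
    ∀ {b c : V} (q : G.Walk b c), Pred c →
      ∃ m, Pred m ∧ ∃ q1 : G.Walk b m, q1.IsPath ∧
        (∀ y ∈ q1.support, Pred y → y = m) ∧ ∀ y ∈ q1.support, y ∈ q.support := by
  classical
  intro b c q
  induction q with
  | nil =>
    intro hc
    refine ⟨_, hc, Walk.nil, Walk.IsPath.nil, ?_, ?_⟩
    · intro y hy _; simpa using hy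
    · intro y hy; exact hy
  | @cons u x w h' q' ih =>
    intro hc
    by_cases hb : Pred u
    · refine ⟨u, hb, Walk.nil, Walk.IsPath.nil, ?_, ?_⟩
      · intro y hy _; simpa using hy
      · intro y hy; simp at hy; subst hy; exact Walk.start_mem_support _
    · obtain ⟨m, hm, q1, hq1p, honly, hsub⟩ := ih hc
      by_cases hu : u ∈ q1.support
      · refine ⟨m, hm, q1.dropUntil u hu, hq1p.dropUntil hu, ?_, ?_⟩
        · intro y hy hPy
          exact honly y (Walk.support_dropUntil_subset q1 hu hy) hPy
        · intro y hy
          have : y ∈ q'.support := hsub y (Walk.support_dropUntil_subset q1 hu hy)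
          exact List.mem_cons_of_mem _ this
      · refine ⟨m, hm, Walk.cons h' q1, hq1p.cons hu, ?_, ?_⟩
        · intro y hy hPy
          rw [Walk.support_cons, List.mem_cons] at hy
          rcases hy with rfl | hy
          · exact absurd hPy hb
          · exact honly y hy hPy
        · intro y hy
          rw [Walk.support_cons, List.mem_cons] at hy
          rcases hy with rfl | hy
          · exact Walk.start_mem_support _
          · exact List.mem_cons_of_mem _ (hsub y hy)

variable (hU : ∀ u v : V, ∃! p : G.Walk u v, p.IsPath)

include hU

lemma exists_median (a b c : V) :
    ∃ m, m ∈ pathSet G a b ∧ m ∈ pathSet G b c ∧ m ∈ pathSet G a c := by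
  classical
  obtain ⟨m, hm, q1, hq1p, honly, hsub⟩ :=
    exists_first (G := G) (fun y => y ∈ pathSet G a c) (tpath hU b c)
      (right_mem_pathSet hU a c)
  refine ⟨m, ?_, ?_, hm⟩
  · have hr : (tpath hU a m).IsPath := tpath_isPath hU a m
    have hsub2 : ∀ y ∈ (tpath hU a m).support, y ∈ pathSet G a c := by
      intro y hy
      have hy' : y ∈ pathSet G a m := (mem_pathSet_iff hU hr).mpr hy
      have hsp := (pathSet_split hU hm).1
      rw [hsp]; exact Or.inl hy'
    have hap : ((tpath hU a m).append q1.reverse).IsPath := by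
      apply isPath_append hr hq1p.reverse
      intro y hy hy'
      rw [support_reverse, List.mem_reverse] at hy'
      exact honly y hy' (hsub2 y hy)
    rw [mem_pathSet_iff hU hap, mem_support_append_iff]
    exact Or.inl (Walk.end_mem_support _)
  · rw [mem_pathSet_iff hU (tpath_isPath hU b c)]
    exact hsub m (Walk.end_mem_support q1)

lemma mem_pathSet_cases {v a b x : V} (hx : x ∈ pathSet G a b) :
    x ∈ pathSet G v a ∨ x ∈ pathSet G v b := by
  obtain ⟨m, hab, hbv, hav⟩ := exists_median hU a b v
  have hsplit := (pathSet_split hU hab).1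
  rw [hsplit] at hx
  rcases hx with h | h
  · left
    rw [pathSet_symm hU v a, (pathSet_split hU hav).1]
    exact Or.inl h
  · right
    rw [pathSet_symm hU v b, (pathSet_split hU hbv).1]
    exact Or.inl ((pathSet_symm hU m b) ▸ h)

end TreeHellyAux

open TreeHellyAux in
/-- For a pseudo-separator assignment `S` on a finite tree with nonempty vertex
set, the subtrees `T^{S(v)} = ⋃_{u ∈ S(v)} P(v, u)` have a common vertex. -/
theorem stmt_12 {V : Type*} [Fintype V] [Nonempty V]
    (G : SimpleGraph V) (hT : G.IsTree)
    (S : V → Finset V) (hS : IsPseudoSepAssignment G S) :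
    (⋂ v : V, ⋃ x ∈ (S v : Set V), pathSet G v x).Nonempty := by
  classical
  have hU := hT.existsUnique_path
  set A : V → Set V := fun v => ⋃ x ∈ (S v : Set V), pathSet G v x with hA
  have hAmem : ∀ v y, y ∈ A v ↔ ∃ s ∈ S v, y ∈ pathSet G v s := by
    intro v y; simp [hA]
  have hself : ∀ v, v ∈ A v := by
    intro v
    obtain ⟨s, hs, -⟩ := hS v v
    exact (hAmem v v).mpr ⟨s, hs, left_mem_pathSet hU v s⟩
  have hconv : ∀ v a b x, a ∈ A v → b ∈ A v → x ∈ pathSet G a b → x ∈ A v := by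
    intro v a b x ha hb hx
    obtain ⟨s, hs, has⟩ := (hAmem v a).mp ha
    obtain ⟨t, ht, hbt⟩ := (hAmem v b).mp hb
    rcases mem_pathSet_cases hU (v := v) hx with h | h
    · refine (hAmem v x).mpr ⟨s, hs, ?_⟩
      rw [(pathSet_split hU has).1]
      exact Or.inl h
    · refine (hAmem v x).mpr ⟨t, ht, ?_⟩
      rw [(pathSet_split hU hbt).1]
      exact Or.inl h
  set x0 : V := Classical.arbitrary V with hx0
  have hgate : ∀ v : V, ∃ g ∈ A v, ∀ y ∈ A v, g ∈ pathSet G x0 y := by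
    intro v
    have hfin : (A v).Finite := Set.toFinite _
    obtain ⟨g, hgF, hgmin⟩ := hfin.toFinset.exists_min_image (fun y => tlen hU x0 y)
      ⟨v, by rw [Set.Finite.mem_toFinset]; exact hself v⟩
    rw [Set.Finite.mem_toFinset] at hgF
    refine ⟨g, hgF, ?_⟩
    intro y hy
    obtain ⟨m, hm1, hm2, hm3⟩ := exists_median hU x0 g y
    have hmA : m ∈ A v := hconv v g y m hgF hy hm2
    have hmin : tlen hU x0 g ≤ tlen hU x0 m :=
      hgmin m (by rw [Set.Finite.mem_toFinset]; exact hmA)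
    have hlen := (pathSet_split hU hm1).2
    have hz : tlen hU m g = 0 := by omega
    have : m = g := SimpleGraph.Walk.eq_of_length_eq_zero hz
    subst this
    exact hm3
  choose g hgA hgGate using hgate
  obtain ⟨v0, -, hv0⟩ := Finset.univ.exists_max_image (fun v => tlen hU x0 (g v))
    Finset.univ_nonempty
  refine ⟨g v0, Set.mem_iInter.mpr ?_⟩
  intro w
  show g v0 ∈ A w
  obtain ⟨u', hu', v', hv', h1, h2⟩ := hS v0 w
  have hpv0 : u' ∈ A v0 := (hAmem v0 u').mpr ⟨u', hu', right_mem_pathSet hU v0 u'⟩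
  have hpw : u' ∈ A w := (hAmem w u').mpr ⟨v', hv', h1⟩
  have hr : g v0 ∈ pathSet G x0 u' := hgGate v0 u' hpv0
  have hgw : g w ∈ pathSet G x0 u' := hgGate w u' hpw
  rw [(pathSet_split hU hgw).1] at hr
  rcases hr with hr | hr
  · have hlen := (pathSet_split hU hr).2
    have hle : tlen hU x0 (g w) ≤ tlen hU x0 (g v0) := hv0 w (Finset.mem_univ w)
    have hz : tlen hU (g v0) (g w) = 0 := by omega
    have : g v0 = g w := SimpleGraph.Walk.eq_of_length_eq_zero hz
    rw [this]
    exact hgA w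
  · exact hconv w (g w) u' (g v0) (hgA w) hpw hr
end

section
/- Let T be a finite tree on vertex set V, let c : V × V → ℝ≥0 be a cost function that is monotone non-decreasing with respect to the target, and let x : V × V → [0,1] be a function satisfying, for every pair v, w ∈ V, Σ_{u ∈ P(v,w)} min(x(u,v), x(u,w)) ≥ 1. Then there exists a pseudo-separator assignment S : V → (finite subsets of V) such that for every v ∈ V, Σ_{u ∈ S(v)} c(u,v) ≤ 2 · Σ_{u ∈ V} c(u,v) · x(u,v). -/
/-!
Root the tree at `v` and work bottom-up: a vertex `t` collects `x(t,v)` plus whatever its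
children carry up; once this load reaches `1/2`, `t` joins `S(v)` and carries nothing further,
otherwise it passes its whole load to its parent. Every vertex of `S(v)` is thus paid for by at
least `1/2` of `x(·,v)`-mass from its own subtree, whose vertices are no cheaper than it by
monotonicity; this gives the factor `2`.

For a pair `u, v`, let `u'` be the vertex of `S(u)` on `P(u,v)` nearest to `v` and `v'` the vertex
of `S(v)` on `P(u,v)` nearest to `u`. The vertices of `P(u,v)` beyond `u'` form a chain of children
rooted at `u` none of which is in `S(u)`, so their `x(·,u)`-mass is below `1/2`; likewise before
`v'` for `x(·,v)`. If `u'` came before `v'`, these two stretches would cover `P(u,v)` and the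
feasibility constraint of the pair would fail.
-/

open scoped Classical

theorem Finset.sum_range_min_le {f g : ℕ → ℝ} {b n : ℕ} (hb : b ≤ n) :
    ∑ i ∈ range n, min (f i) (g i) ≤ ∑ i ∈ range b, g i + ∑ i ∈ Ico b n, f i := by
  rw [← sum_range_add_sum_Ico _ hb]
  gcongr with i _ i _
  exacts [min_le_right _ _, min_le_left _ _]

namespace SimpleGraph

open Finset

variable {V : Type*} {G : SimpleGraph V}

lemma pathSet_comm (u v : V) : pathSet G u v = pathSet G v u := by
  suffices ∀ u v : V, pathSet G u v ⊆ pathSet G v u from (this u v).antisymm (this v u)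
  rintro u v t ⟨p, hp⟩
  exact ⟨p.reverse, by simpa using hp⟩

lemma dist_lt_card [Fintype V] (u v : V) : G.dist u v < Fintype.card V := by
  by_cases h : G.Reachable u v
  · obtain ⟨p, hp, hlen⟩ := h.exists_path_of_dist
    exact hlen ▸ hp.length_lt
  · rw [dist_eq_zero_of_not_reachable h]
    exact Fintype.card_pos_iff.2 ⟨u⟩

namespace IsTree

variable {u v r s t w : V} {p : G.Walk u v}

lemma mem_pathSet_iff (hT : G.IsTree) (hp : p.IsPath) : t ∈ pathSet G u v ↔ t ∈ p.support :=
  ⟨fun ⟨q, hq⟩ ↦ (hT.existsUnique_path u v).unique q.2 hp ▸ hq, fun h ↦ ⟨⟨p, hp⟩, h⟩⟩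

lemma pathSet_self (hT : G.IsTree) (u : V) : pathSet G u u = {u} := by
  ext t
  simp [hT.mem_pathSet_iff Walk.IsPath.nil]

lemma start_mem_pathSet (hT : G.IsTree) (u v : V) : u ∈ pathSet G u v := by
  obtain ⟨p, hp, -⟩ := hT.existsUnique_path u v
  exact (hT.mem_pathSet_iff hp).2 p.start_mem_support

lemma end_mem_pathSet (hT : G.IsTree) (u v : V) : v ∈ pathSet G u v := by
  obtain ⟨p, hp, -⟩ := hT.existsUnique_path u v
  exact (hT.mem_pathSet_iff hp).2 p.end_mem_support

lemma dist_eq_length (hT : G.IsTree) (hp : p.IsPath) : G.dist u v = p.length := by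
  obtain ⟨q, hq, hlen⟩ := hT.1.exists_path_of_dist u v
  rw [← hlen, (hT.existsUnique_path u v).unique hq hp]

lemma dist_getVert (hT : G.IsTree) (hp : p.IsPath) {i : ℕ} (hi : i ≤ p.length) :
    G.dist u (p.getVert i) = i := by
  rw [hT.dist_eq_length (hp.take i), Walk.take_length, min_eq_left hi]

lemma dist_getVert_end (hT : G.IsTree) (hp : p.IsPath) (i : ℕ) :
    G.dist (p.getVert i) v = p.length - i := by
  rw [hT.dist_eq_length (hp.drop i), Walk.drop_length]

lemma getVert_mem_pathSet (hT : G.IsTree) (hp : p.IsPath) (i : ℕ) :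
    p.getVert i ∈ pathSet G u v :=
  (hT.mem_pathSet_iff hp).2 (p.getVert_mem_support i)

lemma getVert_mem_pathSet_getVert (hT : G.IsTree) (hp : p.IsPath) {i j : ℕ} (hij : i ≤ j) :
    p.getVert i ∈ pathSet G u (p.getVert j) := by
  simpa [min_eq_right hij] using hT.getVert_mem_pathSet (hp.take j) i

lemma getVert_mem_pathSet_getVert_end (hT : G.IsTree) (hp : p.IsPath) {i j : ℕ} (hij : i ≤ j) :
    p.getVert j ∈ pathSet G (p.getVert i) v := by
  simpa [add_tsub_cancel_of_le hij] using hT.getVert_mem_pathSet (hp.drop i) (j - i)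

lemma getVert_dist_of_mem_pathSet (hT : G.IsTree) (hp : p.IsPath) (ht : t ∈ pathSet G u v) :
    G.dist u t ≤ p.length ∧ p.getVert (G.dist u t) = t := by
  obtain ⟨i, rfl, hi⟩ := Walk.mem_support_iff_exists_getVert.1 ((hT.mem_pathSet_iff hp).1 ht)
  rw [hT.dist_getVert hp hi]
  exact ⟨hi, rfl⟩

lemma dist_le_of_mem_pathSet (hT : G.IsTree) (ht : t ∈ pathSet G u v) :
    G.dist u t ≤ G.dist u v := by
  obtain ⟨p, hp, -⟩ := hT.existsUnique_path u v
  exact hT.dist_eq_length hp ▸ (hT.getVert_dist_of_mem_pathSet hp ht).1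

lemma eq_of_mem_pathSet_of_dist_eq (hT : G.IsTree) (hs : s ∈ pathSet G u v)
    (ht : t ∈ pathSet G u v) (hst : G.dist u s = G.dist u t) : s = t := by
  obtain ⟨p, hp, -⟩ := hT.existsUnique_path u v
  rw [← (hT.getVert_dist_of_mem_pathSet hp hs).2, ← (hT.getVert_dist_of_mem_pathSet hp ht).2, hst]

lemma mem_pathSet_trans (hT : G.IsTree) (hts : t ∈ pathSet G r s) (hsw : s ∈ pathSet G r w) :
    t ∈ pathSet G r w := by
  obtain ⟨p, hp, -⟩ := hT.existsUnique_path r w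
  obtain ⟨j, rfl, -⟩ := Walk.mem_support_iff_exists_getVert.1 ((hT.mem_pathSet_iff hp).1 hsw)
  rw [hT.mem_pathSet_iff (hp.take j), Walk.support_take] at hts
  exact (hT.mem_pathSet_iff hp).2 (List.mem_of_mem_take hts)

end IsTree

variable [Fintype V]

/-- Children of `t` when `G` is rooted at `r`; phrased through distances rather than `pathSet` so
that recursion along children terminates in every finite graph. -/
noncomputable def children (G : SimpleGraph V) (r t : V) : Finset V :=
  {s | G.Adj t s ∧ G.dist r t < G.dist r s}

noncomputable def subtree (G : SimpleGraph V) (r t : V) : Finset V :=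
  {w | t ∈ pathSet G r w}

variable {r s t w : V}

lemma mem_children : s ∈ children G r t ↔ G.Adj t s ∧ G.dist r t < G.dist r s := by
  simp [children]

lemma mem_subtree : w ∈ subtree G r t ↔ t ∈ pathSet G r w := by
  simp [subtree]

lemma card_sub_dist_lt_of_mem_children (hs : s ∈ children G r t) :
    Fintype.card V - G.dist r s < Fintype.card V - G.dist r t := by
  have := G.dist_lt_card r s
  have := (mem_children.1 hs).2
  omega

theorem children_induction (r : V) {P : V → Prop}
    (ih : ∀ t, (∀ s ∈ children G r t, P s) → P t) (t : V) : P t :=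
  ih t fun s _ ↦ children_induction r ih s
termination_by Fintype.card V - G.dist r t
decreasing_by exact card_sub_dist_lt_of_mem_children ‹_›

namespace IsTree

lemma getVert_succ_mem_children (hT : G.IsTree) {u v : V} {p : G.Walk u v} (hp : p.IsPath)
    {i : ℕ} (hi : i < p.length) : p.getVert (i + 1) ∈ children G u (p.getVert i) := by
  rw [mem_children, hT.dist_getVert hp hi.le, hT.dist_getVert hp hi]
  exact ⟨p.adj_getVert_succ hi, i.lt_succ_self⟩

lemma getVert_mem_children_getVert_succ (hT : G.IsTree) {u v : V} {p : G.Walk u v}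
    (hp : p.IsPath) {i : ℕ} (hi : i < p.length) :
    p.getVert i ∈ children G v (p.getVert (i + 1)) := by
  rw [mem_children, G.dist_comm, hT.dist_getVert_end hp, G.dist_comm, hT.dist_getVert_end hp]
  exact ⟨(p.adj_getVert_succ hi).symm, by omega⟩

lemma isPath_concat_of_mem_children (hT : G.IsTree) {p : G.Walk r t} (hp : p.IsPath)
    (hs : s ∈ children G r t) : (p.concat (mem_children.1 hs).1).IsPath := by
  refine hp.concat (fun hsp ↦ ?_) _
  exact (mem_children.1 hs).2.not_ge (hT.dist_le_of_mem_pathSet ((hT.mem_pathSet_iff hp).2 hsp))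

lemma dist_eq_add_one_of_mem_children (hT : G.IsTree) (hs : s ∈ children G r t) :
    G.dist r s = G.dist r t + 1 := by
  obtain ⟨p, hp, -⟩ := hT.existsUnique_path r t
  rw [hT.dist_eq_length (hT.isPath_concat_of_mem_children hp hs), Walk.length_concat,
    hT.dist_eq_length hp]

lemma mem_pathSet_of_mem_children (hT : G.IsTree) (hs : s ∈ children G r t) :
    t ∈ pathSet G r s := by
  obtain ⟨p, hp, -⟩ := hT.existsUnique_path r t
  exact (hT.mem_pathSet_iff (hT.isPath_concat_of_mem_children hp hs)).2 (by simp)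

lemma subtree_root (hT : G.IsTree) (r : V) : subtree G r r = univ :=
  eq_univ_of_forall fun w ↦ mem_subtree.2 (hT.start_mem_pathSet r w)

lemma mem_subtree_self (hT : G.IsTree) (r t : V) : t ∈ subtree G r t :=
  mem_subtree.2 (hT.end_mem_pathSet r t)

lemma subtree_subset_of_mem_children (hT : G.IsTree) (hs : s ∈ children G r t) :
    subtree G r s ⊆ subtree G r t := fun _ hw ↦
  mem_subtree.2 (hT.mem_pathSet_trans (hT.mem_pathSet_of_mem_children hs) (mem_subtree.1 hw))

lemma notMem_subtree_of_mem_children (hT : G.IsTree) (hs : s ∈ children G r t) :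
    t ∉ subtree G r s := fun ht ↦
  (mem_children.1 hs).2.not_ge (hT.dist_le_of_mem_pathSet (mem_subtree.1 ht))

lemma exists_mem_children_mem_subtree (hT : G.IsTree) (hw : w ∈ subtree G r t) (hwt : w ≠ t) :
    ∃ s ∈ children G r t, w ∈ subtree G r s := by
  obtain ⟨p, hp, -⟩ := hT.existsUnique_path r w
  obtain ⟨hle, ht⟩ := hT.getVert_dist_of_mem_pathSet hp (mem_subtree.1 hw)
  have hlt : G.dist r t < p.length :=
    hle.lt_of_ne fun h ↦ hwt (by rw [← ht, h, p.getVert_length])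
  refine ⟨p.getVert (G.dist r t + 1), ?_, ?_⟩
  · simpa only [ht] using hT.getVert_succ_mem_children hp hlt
  · simpa using mem_subtree.2 (hT.getVert_mem_pathSet_getVert hp hlt)

lemma subtree_eq_insert_biUnion (hT : G.IsTree) (r t : V) :
    subtree G r t = insert t ((children G r t).biUnion (subtree G r)) := by
  ext w
  rw [mem_insert, mem_biUnion]
  constructor
  · intro hw
    by_cases hwt : w = t
    exacts [.inl hwt, .inr (hT.exists_mem_children_mem_subtree hw hwt)]
  · rintro (rfl | ⟨s, hs, hw⟩)
    exacts [hT.mem_subtree_self r w, hT.subtree_subset_of_mem_children hs hw]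

lemma pairwiseDisjoint_subtree (hT : G.IsTree) (r t : V) :
    (children G r t : Set V).PairwiseDisjoint (subtree G r) := by
  intro s₁ hs₁ s₂ hs₂ hne
  refine Finset.disjoint_left.2 fun w hw₁ hw₂ ↦ hne ?_
  refine hT.eq_of_mem_pathSet_of_dist_eq (mem_subtree.1 hw₁) (mem_subtree.1 hw₂) ?_
  rw [hT.dist_eq_add_one_of_mem_children hs₁, hT.dist_eq_add_one_of_mem_children hs₂]

lemma sum_subtree {M : Type*} [AddCommMonoid M] (hT : G.IsTree) (r t : V) (f : V → M) :
    ∑ w ∈ subtree G r t, f w = f t + ∑ s ∈ children G r t, ∑ w ∈ subtree G r s, f w := by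
  have ht : t ∉ (children G r t).biUnion (subtree G r) := by
    simpa [mem_biUnion] using fun s hs ↦ hT.notMem_subtree_of_mem_children hs
  rw [hT.subtree_eq_insert_biUnion r t, sum_insert ht,
    sum_biUnion (hT.pairwiseDisjoint_subtree r t)]

end IsTree

section Greedy

/-- The `x(·,r)`-mass that the subtree of `t` passes up to the parent of `t` in the greedy
construction of the separator of `r`. -/
noncomputable def carry (G : SimpleGraph V) (x : V → V → ℝ) (r t : V) : ℝ :=
  let m := x t r + ∑ s ∈ (children G r t).attach, carry G x r s
  if 1 / 2 ≤ m then 0 else m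
termination_by Fintype.card V - G.dist r t
decreasing_by exact card_sub_dist_lt_of_mem_children s.2

noncomputable def load (G : SimpleGraph V) (x : V → V → ℝ) (r t : V) : ℝ :=
  x t r + ∑ s ∈ children G r t, carry G x r s

noncomputable def greedySeparator (G : SimpleGraph V) (x : V → V → ℝ) (r : V) : Finset V :=
  {t | 1 / 2 ≤ load G x r t}

variable {x : V → V → ℝ}

lemma carry_eq (t : V) :
    carry G x r t = if 1 / 2 ≤ load G x r t then 0 else load G x r t := by
  rw [carry, sum_attach]
  rfl

lemma mem_greedySeparator : t ∈ greedySeparator G x r ↔ 1 / 2 ≤ load G x r t := by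
  simp [greedySeparator]

lemma carry_lt_half (t : V) : carry G x r t < 1 / 2 := by
  rw [carry_eq]
  split_ifs with h
  exacts [by norm_num, not_le.1 h]

lemma carry_nonneg (hx : ∀ t, 0 ≤ x t r) (t : V) : 0 ≤ carry G x r t := by
  induction t using children_induction (G := G) r with
  | ih t ih =>
  rw [carry_eq, load]
  split_ifs
  exacts [le_rfl, add_nonneg (hx t) (sum_nonneg ih)]

lemma carry_of_notMem (ht : t ∉ greedySeparator G x r) : carry G x r t = load G x r t := by
  rw [carry_eq, if_neg (mt mem_greedySeparator.2 ht)]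

lemma mem_greedySeparator_of_half_le (hx : ∀ t, 0 ≤ x t r) (ht : 1 / 2 ≤ x t r) :
    t ∈ greedySeparator G x r :=
  mem_greedySeparator.2 <| ht.trans <| le_add_of_nonneg_right <| sum_nonneg fun s _ ↦
    carry_nonneg hx s

lemma sum_range_le_carry (hx : ∀ t, 0 ≤ x t r) (n : ℕ) (f : ℕ → V)
    (hf : ∀ j < n, f (j + 1) ∈ children G r (f j))
    (hS : ∀ j ≤ n, f j ∉ greedySeparator G x r) :
    ∑ j ∈ range (n + 1), x (f j) r ≤ carry G x r (f 0) := by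
  induction n generalizing f with
  | zero =>
    rw [sum_range_one, carry_of_notMem (hS 0 le_rfl), load]
    exact le_add_of_nonneg_right (sum_nonneg fun s _ ↦ carry_nonneg hx s)
  | succ n ih =>
    rw [carry_of_notMem (hS 0 n.succ.zero_le), load, sum_range_succ', add_comm]
    gcongr
    calc ∑ j ∈ range (n + 1), x (f (j + 1)) r
        ≤ carry G x r (f 1) :=
          ih (fun j ↦ f (j + 1)) (fun j _ ↦ hf (j + 1) (by omega)) fun j _ ↦ hS (j + 1) (by omega)
      _ ≤ ∑ s ∈ children G r (f 0), carry G x r s :=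
          single_le_sum (fun s _ ↦ carry_nonneg hx s) (hf 0 n.succ_pos)

end Greedy

section Budget

variable {x : V → V → ℝ} {r : V}

lemma ite_add_two_mul_carry_mul_le {c : ℝ} (hc : 0 ≤ c) (t : V) :
    (if 1 / 2 ≤ load G x r t then c else 0) + 2 * carry G x r t * c ≤
      2 * load G x r t * c := by
  rw [carry_eq]
  split_ifs with h
  · nlinarith
  · simp

variable {c : V → V → ℝ}

lemma IsTree.sum_subtree_filter_add_le (hT : G.IsTree) (hx : ∀ t, 0 ≤ x t r)
    (hc : ∀ t, 0 ≤ c t r) (hmono : ∀ t, ∀ s ∈ children G r t, c t r ≤ c s r) (t : V) :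
    ∑ w ∈ subtree G r t with 1 / 2 ≤ load G x r w, c w r + 2 * carry G x r t * c t r ≤
      2 * ∑ w ∈ subtree G r t, c w r * x w r := by
  induction t using children_induction (G := G) r with
  | ih t ih =>
  have hchildren : ∀ s ∈ children G r t,
      ∑ w ∈ subtree G r s with 1 / 2 ≤ load G x r w, c w r + 2 * carry G x r s * c t r ≤
        2 * ∑ w ∈ subtree G r s, c w r * x w r := fun s hs ↦ by
    have := mul_le_mul_of_nonneg_left (hmono t s hs) (carry_nonneg (G := G) hx s)
    linarith [ih s hs]
  have hsum := sum_le_sum hchildren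
  rw [sum_add_distrib, ← sum_mul, ← mul_sum, ← mul_sum] at hsum
  have hhead := ite_add_two_mul_carry_mul_le (G := G) (x := x) (r := r) (hc t) t
  have hload : load G x r t = x t r + ∑ s ∈ children G r t, carry G x r s := rfl
  simp only [sum_filter] at hsum ⊢
  rw [hT.sum_subtree r t, hT.sum_subtree r t (fun w ↦ c w r * x w r)]
  linear_combination hhead + hsum + 2 * c t r * hload

theorem IsTree.sum_greedySeparator_le (hT : G.IsTree) (hx : ∀ t, 0 ≤ x t r)
    (hc : ∀ t, 0 ≤ c t r) (hmono : ∀ t, ∀ s ∈ children G r t, c t r ≤ c s r) :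
    ∑ w ∈ greedySeparator G x r, c w r ≤ 2 * ∑ w, c w r * x w r := by
  have h := hT.sum_subtree_filter_add_le hx hc hmono r
  rw [hT.subtree_root] at h
  exact le_of_add_le_of_nonneg_left h
    (mul_nonneg (mul_nonneg zero_le_two (carry_nonneg hx r)) (hc r))

end Budget

section Crossing

lemma IsTree.sum_filter_mem_pathSet {M : Type*} [AddCommMonoid M] (hT : G.IsTree) {u v : V}
    {p : G.Walk u v} (hp : p.IsPath) (f : V → M) :
    ∑ t ∈ univ.filter (· ∈ pathSet G u v), f t = ∑ i ∈ range (p.length + 1), f (p.getVert i) := by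
  have : univ.filter (· ∈ pathSet G u v) = (range (p.length + 1)).image p.getVert := by
    ext t
    simp [hT.mem_pathSet_iff hp, Walk.mem_support_iff_exists_getVert, and_comm]
  rw [this, sum_image fun i hi j hj ↦ hp.getVert_injOn (by simpa [Nat.lt_succ_iff] using hi)
    (by simpa [Nat.lt_succ_iff] using hj)]

variable {x : V → V → ℝ} {u v : V} {p : G.Walk u v}

lemma IsTree.sum_Ico_lt_half_of_notMem (hT : G.IsTree) (hx : ∀ t, 0 ≤ x t u) (hp : p.IsPath)
    {a : ℕ} (ha : a ≤ p.length)
    (hS : ∀ j, a < j → j ≤ p.length → p.getVert j ∉ greedySeparator G x u) :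
    ∑ i ∈ Ico (a + 1) (p.length + 1), x (p.getVert i) u < 1 / 2 := by
  rcases ha.eq_or_lt with rfl | hlt
  · simp
  obtain ⟨n, hn⟩ : ∃ n, p.length = a + 1 + n := ⟨p.length - (a + 1), by omega⟩
  rw [sum_Ico_eq_sum_range, hn, show a + 1 + n + 1 - (a + 1) = n + 1 by omega]
  refine (sum_range_le_carry hx n (fun j ↦ p.getVert (a + 1 + j))
    (fun j _ ↦ hT.getVert_succ_mem_children hp (by omega))
    (fun j _ ↦ hS _ (by omega) (by omega))).trans_lt (carry_lt_half _)

lemma IsTree.sum_range_lt_half_of_notMem (hT : G.IsTree) (hx : ∀ t, 0 ≤ x t v)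
    (hp : p.IsPath) {b : ℕ} (hb : b ≤ p.length)
    (hS : ∀ j < b, p.getVert j ∉ greedySeparator G x v) :
    ∑ i ∈ range b, x (p.getVert i) v < 1 / 2 := by
  rcases b with _ | n
  · simp
  rw [← sum_range_reflect]
  simp only [Nat.add_sub_cancel]
  refine (sum_range_le_carry hx n (fun j ↦ p.getVert (n - j)) (fun j _ ↦ ?_)
    (fun j _ ↦ hS _ (by omega))).trans_lt (carry_lt_half _)
  have := hT.getVert_mem_children_getVert_succ hp (i := n - (j + 1)) (by omega)
  rwa [show n - (j + 1) + 1 = n - j by omega] at this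

theorem IsTree.isPseudoSepAssignment_greedySeparator (hT : G.IsTree) (hx : ∀ u v, 0 ≤ x u v)
    (hfeas : ∀ v w, 1 ≤ ∑ u ∈ univ.filter (· ∈ pathSet G v w), min (x u v) (x u w)) :
    IsPseudoSepAssignment G (greedySeparator G x) := by
  have hself (v : V) : v ∈ greedySeparator G x v := by
    refine mem_greedySeparator_of_half_le (fun t ↦ hx t v) ?_
    have := hfeas v v
    simp [hT.pathSet_self, sum_filter] at this
    linarith
  intro u v
  obtain ⟨p, hp, -⟩ := hT.existsUnique_path u v
  have hv : ∃ i, p.getVert i ∈ greedySeparator G x v := ⟨p.length, by simpa using hself v⟩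
  set a := Nat.findGreatest (p.getVert · ∈ greedySeparator G x u) p.length
  set b := Nat.find hv
  have hb : b ≤ p.length := Nat.find_min' hv (by simpa using hself v)
  by_cases hba : b ≤ a
  · refine ⟨p.getVert a, Nat.findGreatest_spec (P := (p.getVert · ∈ greedySeparator G x u))
      (Nat.zero_le _) (by simpa using hself u),
      p.getVert b, Nat.find_spec hv, ?_, hT.getVert_mem_pathSet_getVert hp hba⟩
    rw [pathSet_comm]
    exact hT.getVert_mem_pathSet_getVert_end hp hba
  · have hU := hT.sum_Ico_lt_half_of_notMem (fun t ↦ hx t u) hp (Nat.findGreatest_le _)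
      fun j hj hjk ↦ Nat.findGreatest_is_greatest hj hjk
    have hV := hT.sum_range_lt_half_of_notMem (fun t ↦ hx t v) hp hb
      fun j hj ↦ Nat.find_min hv hj
    have hmin := sum_range_min_le (f := fun i ↦ x (p.getVert i) u)
      (g := fun i ↦ x (p.getVert i) v) (hb.trans p.length.le_succ)
    have hsub : ∑ i ∈ Ico b (p.length + 1), x (p.getVert i) u ≤
        ∑ i ∈ Ico (a + 1) (p.length + 1), x (p.getVert i) u :=
      sum_le_sum_of_subset_of_nonneg (Ico_subset_Ico_left (by omega)) fun _ _ _ ↦ hx _ _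
    have := hfeas u v
    rw [hT.sum_filter_mem_pathSet hp] at this
    linarith

end Crossing

end SimpleGraph

theorem stmt_13_general {V : Type*} [Fintype V] (G : SimpleGraph V) (hT : G.IsTree)
    (c : V → V → ℝ) (hc0 : ∀ u v, 0 ≤ c u v)
    (hmono : ∀ u v t : V, u ∈ pathSet G v t → c u t ≤ c v t)
    (x : V → V → ℝ) (hx0 : ∀ u v, 0 ≤ x u v)
    (hfeas : ∀ v w : V,
      1 ≤ ∑ u ∈ Finset.univ.filter (· ∈ pathSet G v w), min (x u v) (x u w)) :
    ∃ S : V → Finset V, IsPseudoSepAssignment G S ∧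
      ∀ v : V, (∑ u ∈ S v, c u v) ≤ 2 * ∑ u : V, c u v * x u v :=
  ⟨G.greedySeparator x, hT.isPseudoSepAssignment_greedySeparator hx0 hfeas, fun v ↦
    hT.sum_greedySeparator_le (fun t ↦ hx0 t v) (fun t ↦ hc0 t v) fun t s hs ↦
      hmono t s v (by rw [SimpleGraph.pathSet_comm]; exact hT.mem_pathSet_of_mem_children hs)⟩

/-- Given a finite tree, a cost function monotone non-decreasing with respect to
the target, and a feasible fractional LP solution `x`, there exists a
pseudo-separator assignment `S` with `Σ_{u ∈ S(v)} c(u,v) ≤ 2·Σ_u c(u,v)·x(u,v)`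
for every `v`. -/
theorem stmt_13 {V : Type*} [Fintype V] (G : SimpleGraph V) (hT : G.IsTree)
    (c : V → V → ℝ) (hc0 : ∀ u v, 0 ≤ c u v)
    (hmono : ∀ u v t : V, u ∈ pathSet G v t → c u t ≤ c v t)
    (x : V → V → ℝ) (hx0 : ∀ u v, 0 ≤ x u v) (hx1 : ∀ u v, x u v ≤ 1)
    (hfeas : ∀ v w : V,
      1 ≤ ∑ u ∈ Finset.univ.filter (· ∈ pathSet G v w), min (x u v) (x u w)) :
    ∃ S : V → Finset V, IsPseudoSepAssignment G S ∧
      ∀ v : V, (∑ u ∈ S v, c u v) ≤ 2 * ∑ u : V, c u v * x u v :=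
  stmt_13_general G hT c hc0 hmono x hx0 hfeas
end
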